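/- arXiv:1409.1154 — 2 statements merged into one kernel-verified Lean document; each statement's English description precedes it below -/
import Mathlib

section
/- Let Φ : ℝ³ → GL(m,ℝ) be smooth, satisfying both α·Φ_y = Φ_{xx} and Φ_t = Φ_{xxx}. Then φ := Φ_x·Φ⁻¹ satisfies the second member of the matrix Burgers hierarchy: φ_t - φ_{xxx} - 3·(φ_x·φ)_x - 3·φ_x·φ² = 0. -/
attribute [local instance] Matrix.normedAddCommGroup Matrix.normedSpace

/-- Partial derivative in `x` of a function of `(x,y,t)`. -/
noncomputable def pdx {E : Type*} [NormedAddCommGroup E] [NormedSpace ℝ E]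
    (f : ℝ → ℝ → ℝ → E) : ℝ → ℝ → ℝ → E := fun x y t => deriv (fun s => f s y t) x

/-- Partial derivative in `y` of a function of `(x,y,t)`. -/
noncomputable def pdy {E : Type*} [NormedAddCommGroup E] [NormedSpace ℝ E]
    (f : ℝ → ℝ → ℝ → E) : ℝ → ℝ → ℝ → E := fun x y t => deriv (fun s => f x s t) y

/-- Partial derivative in `t` of a function of `(x,y,t)`. -/
noncomputable def pdt {E : Type*} [NormedAddCommGroup E] [NormedSpace ℝ E]
    (f : ℝ → ℝ → ℝ → E) : ℝ → ℝ → ℝ → E := fun x y t => deriv (fun s => f x y s) t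

set_option maxHeartbeats 1000000

/-! ### Auxiliary material -/

section MatrixCalc

variable {m : ℕ}
local notation "M" => Matrix (Fin m) (Fin m) ℝ

lemma HasDerivAt.matMul {f g : ℝ → M} {f' g' : M} {x : ℝ}
    (hf : HasDerivAt f f' x) (hg : HasDerivAt g g' x) :
    HasDerivAt (fun s => f s * g s) (f' * g x + f x * g') x := by
  letI := (Matrix.linftyOpNormedRing : NormedRing M)
  letI := (Matrix.linftyOpNormedAlgebra : NormedAlgebra ℝ M)
  exact HasDerivAt.fun_mul (𝔸 := M) hf hg

noncomputable def entryCLM (i j : Fin m) : Matrix (Fin m) (Fin m) ℝ →L[ℝ] ℝ :=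
  LinearMap.toContinuousLinearMap
  { toFun := fun A => A i j, map_add' := fun _ _ => rfl, map_smul' := fun _ _ => rfl }

lemma contDiff_entry (i j : Fin m) : ContDiff ℝ (⊤ : ℕ∞) (fun A : M => A i j) :=
  (entryCLM i j).contDiff

lemma contDiff_matrix {X : Type*} [NormedAddCommGroup X] [NormedSpace ℝ X] {f : X → M}
    (h : ∀ i j, ContDiff ℝ (⊤ : ℕ∞) fun x => f x i j) : ContDiff ℝ (⊤ : ℕ∞) f := by
  have hf : f = fun x => ∑ i, ∑ j, Matrix.single i j (f x i j) := by
    funext x; exact Matrix.matrix_eq_sum_single (f x)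
  rw [hf]
  refine ContDiff.sum fun i _ => ContDiff.sum fun j _ => ?_
  have : (fun x => Matrix.single i j (f x i j))
      = fun x => (f x i j) • Matrix.single i j (1:ℝ) := by
    funext x; ext a b; simp [Matrix.single]
  rw [this]
  exact (h i j).smul contDiff_const

lemma contDiff_det : ContDiff ℝ (⊤ : ℕ∞) (fun A : M => A.det) := by
  have : (fun A : M => A.det)
      = fun A => ∑ σ : Equiv.Perm (Fin m), (Equiv.Perm.sign σ : ℝ) * ∏ i, A (σ i) i := by
    funext A; rw [Matrix.det_apply']
  rw [this]
  exact ContDiff.sum fun σ _ => contDiff_const.mul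
    (contDiff_prod fun i _ => contDiff_entry (σ i) i)

lemma contDiff_adjugate : ContDiff ℝ (⊤ : ℕ∞) (fun A : M => A.adjugate) := by
  refine contDiff_matrix fun i j => ?_
  have : (fun A : M => A.adjugate i j)
      = fun A => (A.updateRow j (Pi.single i 1)).det := by
    funext A; rw [Matrix.adjugate_apply]
  rw [this]
  refine contDiff_det.comp (contDiff_matrix fun k l => ?_)
  rcases eq_or_ne k j with rfl | hk
  · have : (fun A : M => A.updateRow k (Pi.single i (1:ℝ)) k l)
        = fun _ : M => (Pi.single i (1:ℝ) : Fin m → ℝ) l := by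
      funext A; simp [Matrix.updateRow_apply]
    rw [this]; exact contDiff_const
  · have : (fun A : M => A.updateRow j (Pi.single i (1:ℝ)) k l)
        = fun A => A k l := by
      funext A; simp [Matrix.updateRow_apply, hk]
    rw [this]; exact contDiff_entry k l

lemma contDiffAt_matrix_inv {A₀ : M} (h : IsUnit A₀) :
    ContDiffAt ℝ (⊤ : ℕ∞) (fun A : M => A⁻¹) A₀ := by
  have hdet : A₀.det ≠ 0 :=
    IsUnit.ne_zero ((Matrix.isUnit_iff_isUnit_det A₀).mp h)
  have heq : (fun A : M => A⁻¹) = fun A => (A.det)⁻¹ • A.adjugate := by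
    funext A; rw [Matrix.inv_def, Ring.inverse_eq_inv']
  rw [heq]
  exact (contDiff_det.contDiffAt.inv hdet).smul contDiff_adjugate.contDiffAt

/-- Derivative of the pointwise inverse of an invertible-matrix-valued path. -/
lemma hasDerivAt_inv_path {h : ℝ → M} {h' : M} {s : ℝ} (hu : ∀ a, IsUnit (h a))
    (hdiff : DifferentiableAt ℝ (fun a => (h a)⁻¹) s) (hd : HasDerivAt h h' s) :
    HasDerivAt (fun a => (h a)⁻¹) (-((h s)⁻¹ * h' * (h s)⁻¹)) s := by
  have hg := hdiff.hasDerivAt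
  have hfg : (fun a => h a * (h a)⁻¹) = fun _ => (1 : M) :=
    funext fun a => Matrix.mul_nonsing_inv _ ((Matrix.isUnit_iff_isUnit_det _).mp (hu a))
  have h2 := hd.matMul hg
  have h3 : HasDerivAt (fun a => h a * (h a)⁻¹) (0 : M) s := by
    rw [hfg]; exact hasDerivAt_const s _
  have h4 : h' * (h s)⁻¹ + h s * deriv (fun a => (h a)⁻¹) s = 0 := h2.unique h3
  have hgf : (h s)⁻¹ * h s = 1 :=
    Matrix.nonsing_inv_mul _ ((Matrix.isUnit_iff_isUnit_det _).mp (hu s))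
  have h5 : (h s)⁻¹ * (h' * (h s)⁻¹) + (h s)⁻¹ * (h s * deriv (fun a => (h a)⁻¹) s) = 0 := by
    rw [← mul_add, h4, mul_zero]
  rw [← mul_assoc, ← mul_assoc, hgf, one_mul] at h5
  have h6 : deriv (fun a => (h a)⁻¹) s = -((h s)⁻¹ * h' * (h s)⁻¹) :=
    eq_neg_of_add_eq_zero_right h5
  rw [← h6]; exact hg

end MatrixCalc

section PartialDeriv

variable {F : Type*} [NormedAddCommGroup F] [NormedSpace ℝ F]

/-- Uncurried form of a function of three real variables. -/
def unc (f : ℝ → ℝ → ℝ → F) : ℝ × ℝ × ℝ → F := fun p => f p.1 p.2.1 p.2.2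

lemma hasDerivAt_sect_x {f : ℝ → ℝ → ℝ → F} {x y t : ℝ}
    (hf : DifferentiableAt ℝ (unc f) (x, y, t)) :
    HasDerivAt (fun s => f s y t) (fderiv ℝ (unc f) (x, y, t) (1, 0, 0)) x := by
  have hc : HasDerivAt (fun s : ℝ => (s, y, t)) ((1:ℝ), (0:ℝ), (0:ℝ)) x :=
    (hasDerivAt_id x).prodMk ((hasDerivAt_const x y).prodMk (hasDerivAt_const x t))
  exact hf.hasFDerivAt.comp_hasDerivAt x hc

lemma hasDerivAt_sect_t {f : ℝ → ℝ → ℝ → F} {x y t : ℝ}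
    (hf : DifferentiableAt ℝ (unc f) (x, y, t)) :
    HasDerivAt (fun s => f x y s) (fderiv ℝ (unc f) (x, y, t) (0, 0, 1)) t := by
  have hc : HasDerivAt (fun s : ℝ => (x, y, s)) ((0:ℝ), (0:ℝ), (1:ℝ)) t :=
    (hasDerivAt_const t x).prodMk ((hasDerivAt_const t y).prodMk (hasDerivAt_id t))
  exact hf.hasFDerivAt.comp_hasDerivAt t hc

lemma pdx_eq_fderiv {f : ℝ → ℝ → ℝ → F} {x y t : ℝ}
    (hf : DifferentiableAt ℝ (unc f) (x, y, t)) :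
    pdx f x y t = fderiv ℝ (unc f) (x, y, t) (1, 0, 0) := (hasDerivAt_sect_x hf).deriv

lemma pdt_eq_fderiv {f : ℝ → ℝ → ℝ → F} {x y t : ℝ}
    (hf : DifferentiableAt ℝ (unc f) (x, y, t)) :
    pdt f x y t = fderiv ℝ (unc f) (x, y, t) (0, 0, 1) := (hasDerivAt_sect_t hf).deriv

lemma contDiff_unc_pdx {f : ℝ → ℝ → ℝ → F} (hf : ContDiff ℝ (⊤ : ℕ∞) (unc f)) :
    ContDiff ℝ (⊤ : ℕ∞) (unc (pdx f)) := by
  have h : unc (pdx f) = fun p => fderiv ℝ (unc f) p (1, 0, 0) := by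
    funext p; obtain ⟨x, y, t⟩ := p
    exact pdx_eq_fderiv (hf.differentiable (by simp) _)
  rw [h]
  exact (hf.fderiv_right (by simp)).clm_apply contDiff_const

lemma contDiff_unc_pdt {f : ℝ → ℝ → ℝ → F} (hf : ContDiff ℝ (⊤ : ℕ∞) (unc f)) :
    ContDiff ℝ (⊤ : ℕ∞) (unc (pdt f)) := by
  have h : unc (pdt f) = fun p => fderiv ℝ (unc f) p (0, 0, 1) := by
    funext p; obtain ⟨x, y, t⟩ := p
    exact pdt_eq_fderiv (hf.differentiable (by simp) _)
  rw [h]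
  exact (hf.fderiv_right (by simp)).clm_apply contDiff_const

lemma fderiv_fderiv_apply {g : ℝ × ℝ × ℝ → F} (hg : ContDiff ℝ (⊤ : ℕ∞) g)
    (p : ℝ × ℝ × ℝ) (v w : ℝ × ℝ × ℝ) :
    fderiv ℝ (fun q => fderiv ℝ g q v) p w = fderiv ℝ (fderiv ℝ g) p w v := by
  have hdc : DifferentiableAt ℝ (fderiv ℝ g) p :=
    (hg.fderiv_right (m := (⊤ : ℕ∞)) (by simp)).differentiable (by simp) p
  rw [fderiv_clm_apply hdc (differentiableAt_const v)]
  simp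

/-- Clairaut's theorem for the partial derivatives `pdx` and `pdt`. -/
lemma clairaut {f : ℝ → ℝ → ℝ → F} (hf : ContDiff ℝ (⊤ : ℕ∞) (unc f)) (x y t : ℝ) :
    pdt (pdx f) x y t = pdx (pdt f) x y t := by
  have hx : unc (pdx f) = fun p => fderiv ℝ (unc f) p (1, 0, 0) := by
    funext p; obtain ⟨x, y, t⟩ := p
    exact pdx_eq_fderiv (hf.differentiable (by simp) _)
  have ht : unc (pdt f) = fun p => fderiv ℝ (unc f) p (0, 0, 1) := by
    funext p; obtain ⟨x, y, t⟩ := p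
    exact pdt_eq_fderiv (hf.differentiable (by simp) _)
  have h1 : pdt (pdx f) x y t = fderiv ℝ (unc (pdx f)) (x, y, t) (0, 0, 1) :=
    pdt_eq_fderiv ((contDiff_unc_pdx hf).differentiable (by simp) _)
  have h2 : pdx (pdt f) x y t = fderiv ℝ (unc (pdt f)) (x, y, t) (1, 0, 0) :=
    pdx_eq_fderiv ((contDiff_unc_pdt hf).differentiable (by simp) _)
  rw [h1, h2, hx, ht, fderiv_fderiv_apply hf, fderiv_fderiv_apply hf]
  exact (hf.contDiffAt.isSymmSndFDerivAt (by rw [minSmoothness_of_isRCLikeNormedField]; exact WithTop.coe_le_coe.mpr (le_top : (2 : ℕ∞) ≤ ⊤))).eq _ _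

lemma sect_hasDerivAt {f : ℝ → ℝ → ℝ → F} (hf : ContDiff ℝ (⊤ : ℕ∞) (unc f)) (y t s : ℝ) :
    HasDerivAt (fun a => f a y t) (pdx f s y t) s := by
  have hcurve : ContDiff ℝ (⊤ : ℕ∞) (fun a : ℝ => (a, (y, t))) := contDiff_id.prodMk contDiff_const
  have hsect : ContDiff ℝ (⊤ : ℕ∞) (fun a : ℝ => f a y t) := hf.comp hcurve
  exact (hsect.differentiable (by simp) s).hasDerivAt

lemma sect_hasDerivAt_t {f : ℝ → ℝ → ℝ → F} (hf : ContDiff ℝ (⊤ : ℕ∞) (unc f)) (x y s : ℝ) :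
    HasDerivAt (fun a => f x y a) (pdt f x y s) s := by
  have hcurve : ContDiff ℝ (⊤ : ℕ∞) (fun a : ℝ => (x, (y, a))) :=
    contDiff_const.prodMk (contDiff_const.prodMk contDiff_id)
  have hsect : ContDiff ℝ (⊤ : ℕ∞) (fun a : ℝ => f x y a) := hf.comp hcurve
  exact (hsect.differentiable (by simp) s).hasDerivAt

end PartialDeriv

/-! ### Abbreviations for the `x`-derivatives of `Φ` at fixed `(y,t)` -/

namespace Stmt9

variable {m : ℕ}

noncomputable def gg (Φ : ℝ → ℝ → ℝ → Matrix (Fin m) (Fin m) ℝ) (y t : ℝ) :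
    ℝ → Matrix (Fin m) (Fin m) ℝ := fun s => (Φ s y t)⁻¹
noncomputable def p1 (Φ : ℝ → ℝ → ℝ → Matrix (Fin m) (Fin m) ℝ) (y t : ℝ) :
    ℝ → Matrix (Fin m) (Fin m) ℝ := fun s => pdx Φ s y t
noncomputable def p2 (Φ : ℝ → ℝ → ℝ → Matrix (Fin m) (Fin m) ℝ) (y t : ℝ) :
    ℝ → Matrix (Fin m) (Fin m) ℝ := fun s => pdx (pdx Φ) s y t
noncomputable def p3 (Φ : ℝ → ℝ → ℝ → Matrix (Fin m) (Fin m) ℝ) (y t : ℝ) :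
    ℝ → Matrix (Fin m) (Fin m) ℝ := fun s => pdx (pdx (pdx Φ)) s y t
noncomputable def p4 (Φ : ℝ → ℝ → ℝ → Matrix (Fin m) (Fin m) ℝ) (y t : ℝ) :
    ℝ → Matrix (Fin m) (Fin m) ℝ := fun s => pdx (pdx (pdx (pdx Φ))) s y t
noncomputable def qq (Φ : ℝ → ℝ → ℝ → Matrix (Fin m) (Fin m) ℝ) (y t : ℝ) :
    ℝ → Matrix (Fin m) (Fin m) ℝ :=
  fun s => gg Φ y t s * p1 Φ y t s * gg Φ y t s
noncomputable def q1 (Φ : ℝ → ℝ → ℝ → Matrix (Fin m) (Fin m) ℝ) (y t : ℝ) :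
    ℝ → Matrix (Fin m) (Fin m) ℝ :=
  fun s => (-qq Φ y t s * p1 Φ y t s + gg Φ y t s * p2 Φ y t s) * gg Φ y t s
    + gg Φ y t s * p1 Φ y t s * -qq Φ y t s
noncomputable def dq1 (Φ : ℝ → ℝ → ℝ → Matrix (Fin m) (Fin m) ℝ) (y t : ℝ) :
    ℝ → Matrix (Fin m) (Fin m) ℝ :=
  fun s => ((-q1 Φ y t s * p1 Φ y t s + -qq Φ y t s * p2 Φ y t s
        + (-qq Φ y t s * p2 Φ y t s + gg Φ y t s * p3 Φ y t s)) * gg Φ y t s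
      + (-qq Φ y t s * p1 Φ y t s + gg Φ y t s * p2 Φ y t s) * -qq Φ y t s)
    + ((-qq Φ y t s * p1 Φ y t s + gg Φ y t s * p2 Φ y t s) * -qq Φ y t s
      + gg Φ y t s * p1 Φ y t s * -q1 Φ y t s)
noncomputable def uu (Φ : ℝ → ℝ → ℝ → Matrix (Fin m) (Fin m) ℝ) (y t : ℝ) :
    ℝ → Matrix (Fin m) (Fin m) ℝ := fun s => p1 Φ y t s * gg Φ y t s
noncomputable def u1 (Φ : ℝ → ℝ → ℝ → Matrix (Fin m) (Fin m) ℝ) (y t : ℝ) :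
    ℝ → Matrix (Fin m) (Fin m) ℝ :=
  fun s => p2 Φ y t s * gg Φ y t s + p1 Φ y t s * -qq Φ y t s
noncomputable def u2 (Φ : ℝ → ℝ → ℝ → Matrix (Fin m) (Fin m) ℝ) (y t : ℝ) :
    ℝ → Matrix (Fin m) (Fin m) ℝ :=
  fun s => p3 Φ y t s * gg Φ y t s + p2 Φ y t s * -qq Φ y t s
    + (p2 Φ y t s * -qq Φ y t s + p1 Φ y t s * -q1 Φ y t s)
noncomputable def du2 (Φ : ℝ → ℝ → ℝ → Matrix (Fin m) (Fin m) ℝ) (y t : ℝ) :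
    ℝ → Matrix (Fin m) (Fin m) ℝ :=
  fun s => p4 Φ y t s * gg Φ y t s + p3 Φ y t s * -qq Φ y t s
    + (p3 Φ y t s * -qq Φ y t s + p2 Φ y t s * -q1 Φ y t s)
    + (p3 Φ y t s * -qq Φ y t s + p2 Φ y t s * -q1 Φ y t s
      + (p2 Φ y t s * -q1 Φ y t s + p1 Φ y t s * -dq1 Φ y t s))

end Stmt9

open Stmt9 in
/-- If the smooth invertible-matrix-valued `Φ(x,y,t)` satisfies
`α Φ_y = Φ_xx` and `Φ_t = Φ_xxx`, then `φ := Φ_x Φ⁻¹` satisfies the second member of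
the matrix Burgers hierarchy `φ_t - φ_xxx - 3 (φ_x φ)_x - 3 φ_x φ² = 0`. -/
theorem stmt_9 {m : ℕ} (α : ℝ) (hα : α ≠ 0)
    (Φ : ℝ → ℝ → ℝ → Matrix (Fin m) (Fin m) ℝ)
    (hΦ : ContDiff ℝ (⊤ : ℕ∞) fun p : ℝ × ℝ × ℝ => Φ p.1 p.2.1 p.2.2)
    (hinv : ∀ x y t, IsUnit (Φ x y t))
    (hheat : ∀ x y t, α • pdy Φ x y t = pdx (pdx Φ) x y t)
    (hheat3 : ∀ x y t, pdt Φ x y t = pdx (pdx (pdx Φ)) x y t)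
    (φ : ℝ → ℝ → ℝ → Matrix (Fin m) (Fin m) ℝ)
    (hφ : ∀ x y t, φ x y t = pdx Φ x y t * (Φ x y t)⁻¹) :
    ∀ x y t, pdt φ x y t - pdx (pdx (pdx φ)) x y t
      - (3 : ℝ) • pdx (fun a b c => pdx φ a b c * φ a b c) x y t
      - (3 : ℝ) • (pdx φ x y t * (φ x y t * φ x y t)) = 0 := by
  intro x y t
  have hP : ContDiff ℝ (⊤ : ℕ∞) (unc Φ) := hΦ
  have hP1 := contDiff_unc_pdx hP
  have hP2 := contDiff_unc_pdx hP1
  have hP3 := contDiff_unc_pdx hP2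
  -- derivative chains in `x` at fixed `(y,t)`
  have hd0 : ∀ s, HasDerivAt (fun a => Φ a y t) (p1 Φ y t s) s :=
    fun s => sect_hasDerivAt hP y t s
  have hd1 : ∀ s, HasDerivAt (p1 Φ y t) (p2 Φ y t s) s :=
    fun s => sect_hasDerivAt hP1 y t s
  have hd2 : ∀ s, HasDerivAt (p2 Φ y t) (p3 Φ y t s) s :=
    fun s => sect_hasDerivAt hP2 y t s
  have hd3 : ∀ s, HasDerivAt (p3 Φ y t) (p4 Φ y t s) s :=
    fun s => sect_hasDerivAt hP3 y t s
  have hgdiff : ∀ s, DifferentiableAt ℝ (fun a => (Φ a y t)⁻¹) s := fun s =>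
    ((contDiffAt_matrix_inv (hinv s y t)).comp s
      ((hP.comp ((contDiff_id.prodMk contDiff_const : ContDiff ℝ (⊤ : ℕ∞) (fun a : ℝ => (a, (y, t)))))).contDiffAt)).differentiableAt (by simp)
  have hdgg : ∀ s, HasDerivAt (gg Φ y t) (-qq Φ y t s) s := fun s =>
    hasDerivAt_inv_path (fun a => hinv a y t) (hgdiff s) (hd0 s)
  have hdqq : ∀ s, HasDerivAt (qq Φ y t) (q1 Φ y t s) s := fun s =>
    ((hdgg s).matMul (hd1 s)).matMul (hdgg s)
  have hduu : ∀ s, HasDerivAt (uu Φ y t) (u1 Φ y t s) s := fun s =>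
    (hd1 s).matMul (hdgg s)
  have hdu1 : ∀ s, HasDerivAt (u1 Φ y t) (u2 Φ y t s) s := fun s =>
    ((hd2 s).matMul (hdgg s)).add ((hd1 s).matMul ((hdqq s).neg))
  have hdq1 : ∀ s, HasDerivAt (q1 Φ y t) (dq1 Φ y t s) s := fun s =>
    (((((hdqq s).neg).matMul (hd1 s)).add ((hdgg s).matMul (hd2 s))).matMul (hdgg s)).add
      ((((hdgg s).matMul (hd1 s))).matMul ((hdqq s).neg))
  have hdu2 : ∀ s, HasDerivAt (u2 Φ y t) (du2 Φ y t s) s := fun s =>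
    (((hd3 s).matMul (hdgg s)).add ((hd2 s).matMul ((hdqq s).neg))).add
      (((hd2 s).matMul ((hdqq s).neg)).add ((hd1 s).matMul ((hdq1 s).neg)))
  -- identification of the sections of φ and its x-derivatives
  have hphi : ∀ s, φ s y t = uu Φ y t s := fun s => hφ s y t
  have h1 : ∀ s, pdx φ s y t = u1 Φ y t s := by
    intro s
    show deriv (fun a => φ a y t) s = _
    rw [show (fun a => φ a y t) = uu Φ y t from funext hphi]
    exact (hduu s).deriv
  have h2 : ∀ s, pdx (pdx φ) s y t = u2 Φ y t s := by
    intro s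
    show deriv (fun a => pdx φ a y t) s = _
    rw [show (fun a => pdx φ a y t) = u1 Φ y t from funext h1]
    exact (hdu1 s).deriv
  have h3 : pdx (pdx (pdx φ)) x y t = du2 Φ y t x := by
    show deriv (fun a => pdx (pdx φ) a y t) x = _
    rw [show (fun a => pdx (pdx φ) a y t) = u2 Φ y t from funext h2]
    exact (hdu2 x).deriv
  have hm : pdx (fun a b c => pdx φ a b c * φ a b c) x y t
      = u2 Φ y t x * uu Φ y t x + u1 Φ y t x * u1 Φ y t x := by
    show deriv (fun a => pdx φ a y t * φ a y t) x = _
    rw [show (fun a => pdx φ a y t * φ a y t) = fun a => u1 Φ y t a * uu Φ y t a from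
      funext fun a => by rw [h1 a, hphi a]]
    exact ((hdu1 x).matMul (hduu x)).deriv
  -- time derivative of φ via Clairaut and the heat hierarchy equation
  have hswap : pdt (pdx Φ) x y t = p4 Φ y t x := by
    rw [clairaut hΦ x y t]
    have he : pdt Φ = fun a b c => pdx (pdx (pdx Φ)) a b c :=
      funext fun a => funext fun b => funext fun c => hheat3 a b c
    rw [he]; rfl
  have hgdiff_t : DifferentiableAt ℝ (fun a => (Φ x y a)⁻¹) t :=
    ((contDiffAt_matrix_inv (hinv x y t)).comp t
      ((hP.comp ((contDiff_const.prodMk (contDiff_const.prodMk contDiff_id) : ContDiff ℝ (⊤ : ℕ∞) (fun a : ℝ => (x, (y, a)))))).contDiffAt)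
      ).differentiableAt (by simp)
  have h0t : HasDerivAt (fun a => Φ x y a) (pdt Φ x y t) t := sect_hasDerivAt_t hP x y t
  have hginv_t : HasDerivAt (fun a => (Φ x y a)⁻¹)
      (-((Φ x y t)⁻¹ * pdt Φ x y t * (Φ x y t)⁻¹)) t :=
    hasDerivAt_inv_path (fun a => hinv x y a) hgdiff_t h0t
  have hP1t : HasDerivAt (fun a => pdx Φ x y a) (pdt (pdx Φ) x y t) t :=
    sect_hasDerivAt_t hP1 x y t
  have ht : pdt φ x y t = p4 Φ y t x * gg Φ y t x
      + p1 Φ y t x * -(gg Φ y t x * p3 Φ y t x * gg Φ y t x) := by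
    show deriv (fun s => φ x y s) t = _
    rw [show (fun s => φ x y s) = fun s => pdx Φ x y s * (Φ x y s)⁻¹ from
      funext fun s => hφ x y s]
    have := (hP1t.matMul hginv_t).deriv
    refine this.trans ?_
    rw [hswap, hheat3 x y t]; rfl
  -- assemble and finish by noncommutative ring arithmetic
  rw [ht, h3, hm, h1 x, hphi x]
  have hsm : ∀ X : Matrix (Fin m) (Fin m) ℝ, (3 : ℝ) • X = X + X + X := by
    intro X
    rw [show (3:ℝ) = 1 + 1 + 1 by norm_num, add_smul, add_smul, one_smul]
  rw [hsm, hsm]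
  simp only [du2, dq1, u2, u1, uu, q1, qq]
  noncomm_ring
end

section
/- Under the hypotheses of the binary Darboux transformation theorem (d, d̄ derivations, φ₀ solving d̄φ₀ = (dφ₀)·φ₀, P, Q, U, V, X solving the Darboux system with α = β = 0), assume additionally Q·V = V·φ₀. Then φ := φ₀ + U·X⁻¹·V satisfies the Riemann equation d̄φ = (dφ)·φ, and moreover (X·P·X⁻¹)·V = V·φ. -/
/-!
Put `W := X⁻¹ V`, so that `φ = φ₀ + U W`. The Sylvester equation together with `Q V = V φ₀`
gives the intertwining relation `P W = W φ`. Differentiating `X W = V` and using the equation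
for `d̄X` and the derivative of `Q V = V φ₀` then shows that `W` solves the linear equation
`d̄W = (dW) φ`, the counterpart of the equation for `U`. With these two facts the Riemann
equation for `φ₀ + U W` is a direct Leibniz-rule computation; no derivative of `X⁻¹` is needed.
-/

open MulOpposite

section Defs

variable {A Ω : Type*} [Ring A] [AddCommGroup Ω] [Module A Ω] [Module Aᵐᵒᵖ Ω]
  [SMulCommClass A Aᵐᵒᵖ Ω]

/-- Product of a matrix over `A` with a matrix over the `A`-bimodule `Ω`. -/
def lmulMat {k l n : ℕ} (M : Matrix (Fin k) (Fin l) A) (W : Matrix (Fin l) (Fin n) Ω) :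
    Matrix (Fin k) (Fin n) Ω :=
  fun i j => ∑ s, M i s • W s j

/-- Product of a matrix over the `A`-bimodule `Ω` with a matrix over `A`. -/
def rmulMat {k l n : ℕ} (W : Matrix (Fin k) (Fin l) Ω) (M : Matrix (Fin l) (Fin n) A) :
    Matrix (Fin k) (Fin n) Ω :=
  fun i j => ∑ s, op (M s j) • W i s

/-- Entrywise extension of a map `d : A → Ω` to matrices. -/
def dMat (d : A → Ω) {k l : ℕ} (M : Matrix (Fin k) (Fin l) A) : Matrix (Fin k) (Fin l) Ω :=
  fun i j => d (M i j)

end Defs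

section MatrixBimodule

variable {A Ω : Type*} [Ring A] [AddCommGroup Ω] {k l p q : ℕ}

section Left

variable [Module A Ω]

lemma lmulMat_lmulMat (M : Matrix (Fin k) (Fin l) A) (N : Matrix (Fin l) (Fin p) A)
    (W : Matrix (Fin p) (Fin q) Ω) : lmulMat M (lmulMat N W) = lmulMat (M * N) W := by
  ext i j
  simp only [lmulMat, Matrix.mul_apply, Finset.smul_sum, Finset.sum_smul, mul_smul]
  exact Finset.sum_comm

lemma one_lmulMat (W : Matrix (Fin k) (Fin l) Ω) :
    lmulMat (1 : Matrix (Fin k) (Fin k) A) W = W := by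
  ext i j
  simp [lmulMat, Matrix.one_apply, ite_smul]

lemma lmulMat_left_cancel {X Xinv : Matrix (Fin k) (Fin k) A} (hX : Xinv * X = 1)
    {W W' : Matrix (Fin k) (Fin l) Ω} (h : lmulMat X W = lmulMat X W') : W = W' := by
  rw [← one_lmulMat (A := A) W, ← one_lmulMat (A := A) W', ← hX, ← lmulMat_lmulMat,
    ← lmulMat_lmulMat, h]

end Left

section Right

variable [Module Aᵐᵒᵖ Ω]

lemma rmulMat_rmulMat (W : Matrix (Fin k) (Fin l) Ω) (M : Matrix (Fin l) (Fin p) A)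
    (N : Matrix (Fin p) (Fin q) A) : rmulMat (rmulMat W M) N = rmulMat W (M * N) := by
  ext i j
  simp only [rmulMat, Matrix.mul_apply, Finset.smul_sum, Finset.sum_smul, Finset.op_sum, op_mul,
    mul_smul]
  exact Finset.sum_comm

lemma add_rmulMat (W W' : Matrix (Fin k) (Fin l) Ω) (M : Matrix (Fin l) (Fin p) A) :
    rmulMat (W + W') M = rmulMat W M + rmulMat W' M := by
  ext i j
  simp [rmulMat, Finset.sum_add_distrib, smul_add]

lemma sub_rmulMat (W W' : Matrix (Fin k) (Fin l) Ω) (M : Matrix (Fin l) (Fin p) A) :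
    rmulMat (W - W') M = rmulMat W M - rmulMat W' M := by
  ext i j
  simp [rmulMat, Finset.sum_sub_distrib, smul_sub]

lemma rmulMat_add (W : Matrix (Fin k) (Fin l) Ω) (M N : Matrix (Fin l) (Fin p) A) :
    rmulMat W (M + N) = rmulMat W M + rmulMat W N := by
  ext i j
  simp [rmulMat, Finset.sum_add_distrib, add_smul]

end Right

variable [Module A Ω] [Module Aᵐᵒᵖ Ω]

lemma lmulMat_rmulMat [SMulCommClass A Aᵐᵒᵖ Ω] (M : Matrix (Fin k) (Fin l) A)
    (W : Matrix (Fin l) (Fin p) Ω) (N : Matrix (Fin p) (Fin q) A) :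
    lmulMat M (rmulMat W N) = rmulMat (lmulMat M W) N := by
  ext i j
  simp only [lmulMat, rmulMat, Finset.smul_sum, smul_comm (M i _)]
  exact Finset.sum_comm

structure IsDerivation (d : A → Ω) : Prop where
  map_add : ∀ a b : A, d (a + b) = d a + d b
  map_mul : ∀ a b : A, d (a * b) = op b • d a + a • d b

lemma IsDerivation.dMat_add {d : A → Ω} (hd : IsDerivation d) (M N : Matrix (Fin k) (Fin l) A) :
    dMat d (M + N) = dMat d M + dMat d N := by
  ext i j
  exact hd.map_add _ _

lemma IsDerivation.dMat_mul {d : A → Ω} (hd : IsDerivation d) (M : Matrix (Fin k) (Fin l) A)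
    (N : Matrix (Fin l) (Fin p) A) :
    dMat d (M * N) = rmulMat (dMat d M) N + lmulMat M (dMat d N) := by
  ext i j
  have hsum := map_sum (AddMonoidHom.mk' d hd.map_add) (fun s => M i s * N s j) Finset.univ
  simp only [AddMonoidHom.mk'_apply] at hsum
  simp only [dMat, rmulMat, lmulMat, Matrix.mul_apply, Matrix.add_apply, hsum, hd.map_mul,
    Finset.sum_add_distrib]

end MatrixBimodule

section Darboux

variable {A Ω : Type*} [Ring A] [AddCommGroup Ω] [Module A Ω] [Module Aᵐᵒᵖ Ω] {m n : ℕ}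
  {φ₀ : Matrix (Fin m) (Fin m) A} {P Q X Xinv : Matrix (Fin n) (Fin n) A}
  {U : Matrix (Fin m) (Fin n) A} {V : Matrix (Fin n) (Fin m) A}

lemma sylvester_intertwining (hXl : X * Xinv = 1) (hXr : Xinv * X = 1)
    (hSyl : X * P - Q * X = V * U) (hQV : Q * V = V * φ₀) :
    P * (Xinv * V) = Xinv * V * (φ₀ + U * (Xinv * V)) :=
  calc P * (Xinv * V) = Xinv * (X * P) * (Xinv * V) := by
        rw [← Matrix.mul_assoc Xinv, hXr, Matrix.one_mul]
    _ = Xinv * V * (U * (Xinv * V)) + Xinv * (Q * (X * Xinv) * V) := by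
        rw [sub_eq_iff_eq_add.mp hSyl]
        simp only [Matrix.mul_add, Matrix.add_mul, Matrix.mul_assoc]
    _ = Xinv * V * (φ₀ + U * (Xinv * V)) := by
        rw [hXl, Matrix.mul_one, hQV, Matrix.mul_add, add_comm]
        simp only [Matrix.mul_assoc]

lemma dMat_inv_mul_eq [SMulCommClass A Aᵐᵒᵖ Ω] {d dbar : A → Ω}
    (hd : IsDerivation d) (hdbar : IsDerivation dbar)
    (hV : dMat dbar V = lmulMat Q (dMat d V) - lmulMat V (dMat d φ₀))
    (hXl : X * Xinv = 1) (hXr : Xinv * X = 1) (hSyl : X * P - Q * X = V * U)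
    (hdX : dMat dbar X - rmulMat (dMat d X) P + rmulMat (dMat d Q) X
      + rmulMat (dMat d V) U = 0)
    (hQV : Q * V = V * φ₀) :
    dMat dbar (Xinv * V) = rmulMat (dMat d (Xinv * V)) (φ₀ + U * (Xinv * V)) := by
  set W := Xinv * V
  have hXW : X * W = V := by rw [← Matrix.mul_assoc, hXl, Matrix.one_mul]
  have hPW : P * W = W * (φ₀ + U * W) := sylvester_intertwining hXl hXr hSyl hQV
  have hdV : dMat d V = rmulMat (dMat d X) W + lmulMat X (dMat d W) := by
    rw [← hd.dMat_mul, hXW]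
  have hdbarV : dMat dbar V = rmulMat (dMat dbar X) W + lmulMat X (dMat dbar W) := by
    rw [← hdbar.dMat_mul, hXW]
  have hdQV : rmulMat (dMat d Q) V + lmulMat Q (dMat d V)
      = rmulMat (dMat d V) φ₀ + lmulMat V (dMat d φ₀) := by
    rw [← hd.dMat_mul, ← hd.dMat_mul, hQV]
  have hdbarX : dMat dbar X
      = rmulMat (dMat d X) P - rmulMat (dMat d Q) X - rmulMat (dMat d V) U := by
    rw [← sub_eq_zero, ← hdX]; abel
  apply lmulMat_left_cancel hXr
  calc lmulMat X (dMat dbar W) = dMat dbar V - rmulMat (dMat dbar X) W := by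
        rw [hdbarV, add_sub_cancel_left]
    _ = rmulMat (dMat d V) (φ₀ + U * W) - rmulMat (rmulMat (dMat d X) W) (φ₀ + U * W) := by
        rw [hV, hdbarX]
        simp only [sub_rmulMat, rmulMat_rmulMat, hPW, hXW, rmulMat_add (dMat d V)]
        rw [← sub_eq_zero, ← sub_eq_zero.mpr hdQV]
        abel
    _ = lmulMat X (rmulMat (dMat d W) (φ₀ + U * W)) := by
        rw [hdV, add_rmulMat, add_sub_cancel_left, lmulMat_rmulMat]

lemma riemann_add_mul [SMulCommClass A Aᵐᵒᵖ Ω] {d dbar : A → Ω}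
    (hd : IsDerivation d) (hdbar : IsDerivation dbar) {W : Matrix (Fin n) (Fin m) A}
    (hφ₀ : dMat dbar φ₀ = rmulMat (dMat d φ₀) φ₀)
    (hU : dMat dbar U = rmulMat (dMat d U) P + rmulMat (dMat d φ₀) U)
    (hW : dMat dbar W = rmulMat (dMat d W) (φ₀ + U * W))
    (hPW : P * W = W * (φ₀ + U * W)) :
    dMat dbar (φ₀ + U * W) = rmulMat (dMat d (φ₀ + U * W)) (φ₀ + U * W) := by
  simp only [hd.dMat_add, hdbar.dMat_add, hd.dMat_mul, hdbar.dMat_mul, hφ₀, hU, hW, add_rmulMat,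
    rmulMat_rmulMat, hPW, lmulMat_rmulMat, rmulMat_add (dMat d φ₀)]
  abel

end Darboux

theorem stmt_18_general {A Ω : Type*} [Ring A] [AddCommGroup Ω] [Module A Ω] [Module Aᵐᵒᵖ Ω]
    [SMulCommClass A Aᵐᵒᵖ Ω]
    (d dbar : A → Ω)
    (hd_add : ∀ a b : A, d (a + b) = d a + d b)
    (hdbar_add : ∀ a b : A, dbar (a + b) = dbar a + dbar b)
    (hd_leib : ∀ a b : A, d (a * b) = op b • d a + a • d b)
    (hdbar_leib : ∀ a b : A, dbar (a * b) = op b • dbar a + a • dbar b)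
    {m n : ℕ}
    (φ₀ : Matrix (Fin m) (Fin m) A)
    (hφ₀ : dMat dbar φ₀ = rmulMat (dMat d φ₀) φ₀)
    (P Q : Matrix (Fin n) (Fin n) A)
    (U : Matrix (Fin m) (Fin n) A) (V : Matrix (Fin n) (Fin m) A)
    (hU : dMat dbar U = rmulMat (dMat d U) P + rmulMat (dMat d φ₀) U)
    (hV : dMat dbar V = lmulMat Q (dMat d V) - lmulMat V (dMat d φ₀))
    (X Xinv : Matrix (Fin n) (Fin n) A)
    (hXl : X * Xinv = 1) (hXr : Xinv * X = 1)
    (hSyl : X * P - Q * X = V * U)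
    (hdX : dMat dbar X - rmulMat (dMat d X) P + rmulMat (dMat d Q) X
      + rmulMat (dMat d V) U = 0)
    (hQV : Q * V = V * φ₀)
    (φ : Matrix (Fin m) (Fin m) A)
    (hφ : φ = φ₀ + U * Xinv * V) :
    dMat dbar φ = rmulMat (dMat d φ) φ ∧ X * P * Xinv * V = V * φ := by
  have hd : IsDerivation d := ⟨hd_add, hd_leib⟩
  have hdbar : IsDerivation dbar := ⟨hdbar_add, hdbar_leib⟩
  have hPW := sylvester_intertwining hXl hXr hSyl hQV
  rw [Matrix.mul_assoc] at hφ
  subst hφ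
  refine ⟨riemann_add_mul hd hdbar hφ₀ hU
    (dMat_inv_mul_eq hd hdbar hV hXl hXr hSyl hdX hQV) hPW, ?_⟩
  calc X * P * Xinv * V = X * (P * (Xinv * V)) := by simp only [Matrix.mul_assoc]
    _ = X * Xinv * V * (φ₀ + U * (Xinv * V)) := by rw [hPW]; simp only [Matrix.mul_assoc]
    _ = V * (φ₀ + U * (Xinv * V)) := by rw [hXl, Matrix.one_mul]

/-- Under the hypotheses of the binary Darboux transformation theorem
(`α = β = 0`), if in addition `Q·V = V·φ₀`, then `φ := φ₀ + U X⁻¹ V` satisfies the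
Riemann equation `d̄φ = (dφ)·φ`, and moreover `(X P X⁻¹)·V = V·φ`. -/
theorem stmt_18 {A Ω : Type*} [Ring A] [AddCommGroup Ω] [Module A Ω] [Module Aᵐᵒᵖ Ω]
    [SMulCommClass A Aᵐᵒᵖ Ω]
    (d dbar : A → Ω)
    (hd_add : ∀ a b : A, d (a + b) = d a + d b)
    (hdbar_add : ∀ a b : A, dbar (a + b) = dbar a + dbar b)
    (hd_leib : ∀ a b : A, d (a * b) = op b • d a + a • d b)
    (hdbar_leib : ∀ a b : A, dbar (a * b) = op b • dbar a + a • dbar b)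
    {m n : ℕ}
    (φ₀ : Matrix (Fin m) (Fin m) A)
    (hφ₀ : dMat dbar φ₀ = rmulMat (dMat d φ₀) φ₀)
    (P Q : Matrix (Fin n) (Fin n) A)
    (hP : dMat dbar P = rmulMat (dMat d P) P)
    (hQ : dMat dbar Q = lmulMat Q (dMat d Q))
    (U : Matrix (Fin m) (Fin n) A) (V : Matrix (Fin n) (Fin m) A)
    (hU : dMat dbar U = rmulMat (dMat d U) P + rmulMat (dMat d φ₀) U)
    (hV : dMat dbar V = lmulMat Q (dMat d V) - lmulMat V (dMat d φ₀))
    (X Xinv : Matrix (Fin n) (Fin n) A)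
    (hXl : X * Xinv = 1) (hXr : Xinv * X = 1)
    (hSyl : X * P - Q * X = V * U)
    (hdX : dMat dbar X - rmulMat (dMat d X) P + rmulMat (dMat d Q) X
      + rmulMat (dMat d V) U = 0)
    (hQV : Q * V = V * φ₀)
    (φ : Matrix (Fin m) (Fin m) A)
    (hφ : φ = φ₀ + U * Xinv * V) :
    dMat dbar φ = rmulMat (dMat d φ) φ ∧ X * P * Xinv * V = V * φ :=
  stmt_18_general d dbar hd_add hdbar_add hd_leib hdbar_leib φ₀ hφ₀ P Q U V hU hV X Xinv hXl hXr
    hSyl hdX hQV φ hφ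
end
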